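/- Let γ₁ > γ₂ > γ₃ be real numbers and let A = |γ₃−γ₂|(1+|γ₁|+|γ₁|²) + |γ₃−γ₁|(1+|γ₂|+|γ₂|²) + |γ₂−γ₁|(1+|γ₃|+|γ₃|²). Then for each i ∈ {1,2,3} and all real t, s: |gᵢ(t,s)| + |∂gᵢ/∂t (t,s)| + |∂²gᵢ/∂t² (t,s)| ≤ A e^{−γᵢ(t−s)}, where the partial derivatives are taken on each of the two pieces t ≥ s and t ≤ s. -/

import Mathlib

/-
On each piece, `gᵢ` and its `t`-derivatives are combinations `∑ⱼ cⱼ (-γⱼ)ᵏ e^{-γⱼ(t-s)}` in which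
only rates with `γⱼ(t-s) ≥ γᵢ(t-s)` occur: those with `γⱼ ≥ γᵢ` on `t ≥ s`, those with `γⱼ ≤ γᵢ`
on `t ≤ s`. Hence every exponential is at most `e^{-γᵢ(t-s)}`, and the triangle inequality bounds
`|gᵢ| + |∂ₜgᵢ| + |∂ₜ²gᵢ|` by `∑ⱼ |cⱼ| (1 + |γⱼ| + |γⱼ|²) e^{-γᵢ(t-s)} ≤ A e^{-γᵢ(t-s)}`.
-/

open MeasureTheory Filter Set Real Asymptotics

noncomputable section

/-- The `k`-th `t`-derivative of the piecewise kernel `gᵢ`, `i = 1,…,4`,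
computed on each of the two pieces `t ≥ s`, `t ≤ s`. -/
def gker (g1 g2 g3 : ℝ) (i k : ℕ) (t s : ℝ) : ℝ :=
  let h : ℝ → ℝ := fun g => (-g) ^ k * Real.exp (-g * (t - s))
  if i = 1 then
    (if s ≤ t then 0 else (g2 - g3) * h g1 + (g3 - g1) * h g2 + (g1 - g2) * h g3)
  else if i = 2 then
    (if s ≤ t then (g2 - g3) * h g1 else (g1 - g2) * h g3 + (g3 - g1) * h g2)
  else if i = 3 then
    (if s ≤ t then (g2 - g3) * h g1 + (g3 - g1) * h g2 else (g2 - g1) * h g3)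
  else
    (if s ≤ t then (g2 - g3) * h g1 + (g3 - g1) * h g2 + (g1 - g2) * h g3 else 0)

/-- The constant `A`. -/
def Aconst3 (g1 g2 g3 : ℝ) : ℝ :=
  |g3 - g2| * (1 + |g1| + |g1| ^ 2) + |g3 - g1| * (1 + |g2| + |g2| ^ 2) +
    |g2 - g1| * (1 + |g3| + |g3| ^ 2)

open Finset

/-- The `k`-th derivative of `x ↦ ∑ j ∈ s, c j * exp (-g j * x)`. -/
def expSumDeriv {ι : Type*} (s : Finset ι) (c g : ι → ℝ) (k : ℕ) (x : ℝ) : ℝ :=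
  ∑ j ∈ s, c j * ((-g j) ^ k * exp (-g j * x))

lemma abs_mul_neg_pow_mul_exp_add_le {c g γ x : ℝ} (h : γ * x ≤ g * x) :
    |c * ((-g) ^ 0 * exp (-g * x))| + |c * ((-g) ^ 1 * exp (-g * x))| +
        |c * ((-g) ^ 2 * exp (-g * x))| ≤
      |c| * (1 + |g| + |g| ^ 2) * exp (-γ * x) := by
  have hexp : exp (-g * x) ≤ exp (-γ * x) := exp_le_exp.2 (by linarith)
  calc _ = |c| * (1 + |g| + |g| ^ 2) * exp (-g * x) := by
          simp only [abs_mul, abs_pow, abs_neg, abs_exp]; ring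
    _ ≤ _ := by gcongr

lemma abs_expSumDeriv_add_le {ι : Type*} (s : Finset ι) (c g : ι → ℝ) {γ x : ℝ}
    (h : ∀ j ∈ s, γ * x ≤ g j * x) :
    |expSumDeriv s c g 0 x| + |expSumDeriv s c g 1 x| + |expSumDeriv s c g 2 x| ≤
      (∑ j ∈ s, |c j| * (1 + |g j| + |g j| ^ 2)) * exp (-γ * x) := by
  unfold expSumDeriv
  calc _ ≤ ∑ j ∈ s, |c j * ((-g j) ^ 0 * exp (-g j * x))| +
          ∑ j ∈ s, |c j * ((-g j) ^ 1 * exp (-g j * x))| +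
          ∑ j ∈ s, |c j * ((-g j) ^ 2 * exp (-g j * x))| := by
        gcongr <;> exact abs_sum_le_sum_abs _ _
    _ = ∑ j ∈ s, (|c j * ((-g j) ^ 0 * exp (-g j * x))| +
          |c j * ((-g j) ^ 1 * exp (-g j * x))| +
          |c j * ((-g j) ^ 2 * exp (-g j * x))|) := by
        rw [sum_add_distrib, sum_add_distrib]
    _ ≤ ∑ j ∈ s, |c j| * (1 + |g j| + |g j| ^ 2) * exp (-γ * x) :=
        sum_le_sum fun j hj => abs_mul_neg_pow_mul_exp_add_le (h j hj)
    _ = _ := (sum_mul _ _ _).symm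

/-- Every piece of `gker` is, up to sign, a partial sum of `∑ⱼ greenCoeff j * hⱼ`. -/
def greenCoeff (g1 g2 g3 : ℝ) : Fin 3 → ℝ := ![g2 - g3, g3 - g1, g1 - g2]

lemma Aconst3_eq_sum (g1 g2 g3 : ℝ) :
    Aconst3 g1 g2 g3 =
      ∑ j, |greenCoeff g1 g2 g3 j| * (1 + |![g1, g2, g3] j| + |![g1, g2, g3] j| ^ 2) := by
  simp [Aconst3, greenCoeff, Fin.sum_univ_three, abs_sub_comm]

lemma abs_add_le_Aconst3_mul_exp {g1 g2 g3 γ x : ℝ} (s : Finset (Fin 3))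
    (h : ∀ j ∈ s, γ * x ≤ ![g1, g2, g3] j * x) (F : ℕ → ℝ)
    (hF : ∀ k, |F k| = |expSumDeriv s (greenCoeff g1 g2 g3) ![g1, g2, g3] k x|) :
    |F 0| + |F 1| + |F 2| ≤ Aconst3 g1 g2 g3 * exp (-γ * x) := by
  simp only [hF]
  refine (abs_expSumDeriv_add_le s _ _ h).trans ?_
  rw [Aconst3_eq_sum]
  gcongr
  exact subset_univ s

section
variable {g1 g2 g3 t s : ℝ} (k : ℕ)

lemma gker_one_of_le (h : s ≤ t) :
    gker g1 g2 g3 1 k t s = expSumDeriv ∅ (greenCoeff g1 g2 g3) ![g1, g2, g3] k (t - s) := by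
  simp [gker, expSumDeriv, h]

lemma gker_two_of_le (h : s ≤ t) :
    gker g1 g2 g3 2 k t s = expSumDeriv {0} (greenCoeff g1 g2 g3) ![g1, g2, g3] k (t - s) := by
  simp [gker, expSumDeriv, greenCoeff, h]

lemma gker_three_of_le (h : s ≤ t) :
    gker g1 g2 g3 3 k t s =
      expSumDeriv {0, 1} (greenCoeff g1 g2 g3) ![g1, g2, g3] k (t - s) := by
  simp [gker, expSumDeriv, greenCoeff, h]

lemma gker_one_of_lt (h : t < s) :
    gker g1 g2 g3 1 k t s = expSumDeriv univ (greenCoeff g1 g2 g3) ![g1, g2, g3] k (t - s) := by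
  simp [gker, expSumDeriv, greenCoeff, h.not_ge, Fin.sum_univ_three]

lemma gker_two_of_lt (h : t < s) :
    gker g1 g2 g3 2 k t s =
      expSumDeriv {1, 2} (greenCoeff g1 g2 g3) ![g1, g2, g3] k (t - s) := by
  simp [gker, expSumDeriv, greenCoeff, h.not_ge]
  ring

lemma gker_three_of_lt (h : t < s) :
    gker g1 g2 g3 3 k t s =
      -expSumDeriv {2} (greenCoeff g1 g2 g3) ![g1, g2, g3] k (t - s) := by
  simp [gker, expSumDeriv, greenCoeff, h.not_ge]
  ring

end

/-- The bound `|gᵢ| + |∂ₜgᵢ| + |∂ₜ²gᵢ| ≤ A e^{-γᵢ(t-s)}` for `i = 1, 2, 3`. -/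
theorem thm_green_kernel_bound (g1 g2 g3 : ℝ) (h12 : g1 > g2) (h23 : g2 > g3) :
    ∀ t s : ℝ,
      (|gker g1 g2 g3 1 0 t s| + |gker g1 g2 g3 1 1 t s| + |gker g1 g2 g3 1 2 t s| ≤
        Aconst3 g1 g2 g3 * Real.exp (-g1 * (t - s))) ∧
      (|gker g1 g2 g3 2 0 t s| + |gker g1 g2 g3 2 1 t s| + |gker g1 g2 g3 2 2 t s| ≤
        Aconst3 g1 g2 g3 * Real.exp (-g2 * (t - s))) ∧
      (|gker g1 g2 g3 3 0 t s| + |gker g1 g2 g3 3 1 t s| + |gker g1 g2 g3 3 2 t s| ≤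
        Aconst3 g1 g2 g3 * Real.exp (-g3 * (t - s))) := by
  intro t s
  have h13 : g3 ≤ g1 := (h23.trans h12).le
  rcases le_or_gt s t with hst | hts
  · have mono {a b : ℝ} (h : a ≤ b) : a * (t - s) ≤ b * (t - s) :=
      mul_le_mul_of_nonneg_right h (sub_nonneg.2 hst)
    refine ⟨?_, ?_, ?_⟩
    · exact abs_add_le_Aconst3_mul_exp ∅ (by simp) (gker g1 g2 g3 1 · t s)
        fun k => by rw [gker_one_of_le k hst]
    · refine abs_add_le_Aconst3_mul_exp {0} ?_ (gker g1 g2 g3 2 · t s)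
        fun k => by rw [gker_two_of_le k hst]
      simpa using mono h12.le
    · refine abs_add_le_Aconst3_mul_exp {0, 1} ?_ (gker g1 g2 g3 3 · t s)
        fun k => by rw [gker_three_of_le k hst]
      simpa using ⟨mono h13, mono h23.le⟩
  · have anti {a b : ℝ} (h : b ≤ a) : a * (t - s) ≤ b * (t - s) :=
      mul_le_mul_of_nonpos_right h (sub_nonpos.2 hts.le)
    refine ⟨?_, ?_, ?_⟩
    · refine abs_add_le_Aconst3_mul_exp univ ?_ (gker g1 g2 g3 1 · t s)
        fun k => by rw [gker_one_of_lt k hts]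
      simpa [Fin.forall_fin_succ] using ⟨anti h12.le, anti h13⟩
    · refine abs_add_le_Aconst3_mul_exp {1, 2} ?_ (gker g1 g2 g3 2 · t s)
        fun k => by rw [gker_two_of_lt k hts]
      simpa using anti h23.le
    · exact abs_add_le_Aconst3_mul_exp {2} (by simp) (gker g1 g2 g3 3 · t s)
        fun k => by rw [gker_three_of_lt k hts, abs_neg]
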